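/- arXiv:2211.10969 — 5 statements merged into one kernel-verified Lean document; each statement's English description precedes it below -/
import Mathlib

section
/- Any bidder in the optimal set for anonymous pricing with costs is individually profitable: if S_o maximizes g(S) = r·(1 − ∏_{i∈S} F_i(r)) − ∑_{i∈S} c_i over all S ⊆ N, then for every i ∈ S_o, r·(1 − F_i(r)) − c_i ≥ 0. -/
/-!
Dropping a bidder `i` from an optimal set `S` cannot help, so its marginal contribution
`r (1 - F i) ∏_{S \ {i}} F - c i` is nonnegative; since the product over the remaining
bidders is at most `1`, the stand-alone profit `r (1 - F i) - c i` is at least as large.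
-/

open Finset

def anonymousPricingProfit {ι : Type*} (F c : ι → ℝ) (r : ℝ) (S : Finset ι) : ℝ :=
  r * (1 - ∏ i ∈ S, F i) - ∑ i ∈ S, c i

theorem anonymousPricingProfit_sub_erase {ι : Type*} [DecidableEq ι] (F c : ι → ℝ) (r : ℝ)
    {S : Finset ι} {i : ι} (hi : i ∈ S) :
    anonymousPricingProfit F c r S - anonymousPricingProfit F c r (S.erase i)
      = r * (1 - F i) * ∏ j ∈ S.erase i, F j - c i := by
  unfold anonymousPricingProfit
  rw [← mul_prod_erase S F hi, ← add_sum_erase S c hi]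
  ring

theorem marginal_le_standalone {ι : Type*} [DecidableEq ι] {F : ι → ℝ} {r : ℝ} (c : ι → ℝ)
    (hr : 0 ≤ r) {S : Finset ι} (hF : ∀ j ∈ S, F j ∈ Set.Icc (0 : ℝ) 1) {i : ι} (hi : i ∈ S) :
    r * (1 - F i) * ∏ j ∈ S.erase i, F j - c i ≤ r * (1 - F i) - c i := by
  have hprod : ∏ j ∈ S.erase i, F j ≤ 1 :=
    prod_le_one (fun j hj => (hF j (mem_of_mem_erase hj)).1)
      (fun j hj => (hF j (mem_of_mem_erase hj)).2)
  have hstand : 0 ≤ r * (1 - F i) := mul_nonneg hr (sub_nonneg.2 (hF i hi).2)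
  linarith [mul_le_of_le_one_right hstand hprod]

theorem stmt_4_general {ι : Type*} (N : Finset ι) (F c : ι → ℝ) (r : ℝ)
    (hr : 0 ≤ r) (hF : ∀ i ∈ N, F i ∈ Set.Icc (0 : ℝ) 1)
    (So : Finset ι) (hSoN : So ⊆ N)
    (hopt : ∀ S ⊆ N,
      r * (1 - ∏ i ∈ S, F i) - ∑ i ∈ S, c i
        ≤ r * (1 - ∏ i ∈ So, F i) - ∑ i ∈ So, c i) :
    ∀ i ∈ So, 0 ≤ r * (1 - F i) - c i := by
  classical
  intro i hi
  have hdrop : anonymousPricingProfit F c r (So.erase i) ≤ anonymousPricingProfit F c r So :=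
    hopt _ ((erase_subset i So).trans hSoN)
  calc 0 ≤ anonymousPricingProfit F c r So - anonymousPricingProfit F c r (So.erase i) := by
          linarith
    _ = r * (1 - F i) * ∏ j ∈ So.erase i, F j - c i :=
          anonymousPricingProfit_sub_erase F c r hi
    _ ≤ r * (1 - F i) - c i :=
          marginal_le_standalone c hr (fun j hj => hF j (hSoN hj)) hi

/-- Any bidder in the optimal set for anonymous pricing with costs is
individually profitable: if `S_o` maximizes
`g(S) = r * (1 - ∏ i in S, F i) - ∑ i in S, c i` over all `S ⊆ N`, then for
every `i ∈ S_o`, `r * (1 - F i) - c i ≥ 0`. -/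
theorem stmt_4 {ι : Type*} (N : Finset ι) (F c : ι → ℝ) (r : ℝ)
    (hr : 0 ≤ r) (hF : ∀ i ∈ N, F i ∈ Set.Icc (0 : ℝ) 1)
    (hc : ∀ i ∈ N, 0 ≤ c i)
    (So : Finset ι) (hSoN : So ⊆ N)
    (hopt : ∀ S ⊆ N,
      r * (1 - ∏ i ∈ S, F i) - ∑ i ∈ S, c i
        ≤ r * (1 - ∏ i ∈ So, F i) - ∑ i ∈ So, c i) :
    ∀ i ∈ So, 0 ≤ r * (1 - F i) - c i :=
  stmt_4_general N F c r hr hF So hSoN hopt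
end

section
/- At most one special bidder in the optimum: let w_i > 0, c_i ≥ 0 for i ∈ N, define g(S) = r·(1 − e^{−∑_{i∈S} w_i}) − ∑_{i∈S} c_i with r > 0, and let T = {i : r·e^{−w_i}·w_i < c_i}. If S_o maximizes g over subsets of N, then |S_o ∩ T| ≤ 1. -/
/-!
If two special bidders `a`, `b` with `w a ≤ w b` were in an optimal set of total weight `W`,
dropping `a` would lose revenue `r (e^{w a - W} - e^{-W}) ≤ r e^{-w b} (1 - e^{-w a}) ≤ r e^{-w a} w a`,
which is less than the saved cost `c a`.
-/

open Real Finset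

lemma exp_neg_sub_exp_neg_le {a b W : ℝ} (ha : 0 ≤ a) (hab : a ≤ b) (hW : a + b ≤ W) :
    exp (-(W - a)) - exp (-W) ≤ exp (-a) * a := by
  have hexp_a : 0 ≤ exp a - 1 := by linarith [one_le_exp ha]
  calc exp (-(W - a)) - exp (-W) = exp (-W) * (exp a - 1) := by
        rw [show -(W - a) = -W + a by ring, exp_add]; ring
    _ ≤ exp (-(a + b)) * (exp a - 1) := by gcongr
    _ = exp (-b) * (1 - exp (-a)) := by
        rw [neg_add, exp_add, exp_neg a]; field_simp
    _ ≤ exp (-a) * a := by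
        apply mul_le_mul (exp_le_exp.2 (neg_le_neg hab)) _ _ (exp_pos _).le
        · linarith [add_one_le_exp (-a)]
        · linarith [exp_le_one_iff.2 (neg_nonpos.2 ha)]

lemma Finset.add_le_sum_of_ne {ι : Type*} {S : Finset ι} {f : ι → ℝ}
    (hf : ∀ i ∈ S, 0 ≤ f i) {a b : ι} (ha : a ∈ S) (hb : b ∈ S) (hab : a ≠ b) :
    f a + f b ≤ ∑ i ∈ S, f i := by
  classical
  rw [← sum_pair hab]
  exact sum_le_sum_of_subset_of_nonneg (insert_subset ha (singleton_subset_iff.2 hb))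
    fun i hi _ => hf i hi

lemma exp_neg_sum_erase_sub_exp_neg_sum_le {ι : Type*} [DecidableEq ι] {S : Finset ι}
    {w : ι → ℝ} (hw : ∀ i ∈ S, 0 ≤ w i) {a b : ι} (ha : a ∈ S) (hb : b ∈ S) (hab : a ≠ b)
    (hwab : w a ≤ w b) :
    exp (-∑ i ∈ S.erase a, w i) - exp (-∑ i ∈ S, w i) ≤ exp (-w a) * w a := by
  have herase : ∑ i ∈ S.erase a, w i = ∑ i ∈ S, w i - w a := by
    rw [← add_sum_erase S w ha]; ring
  rw [herase]
  exact exp_neg_sub_exp_neg_le (hw a ha) hwab (add_le_sum_of_ne hw ha hb hab)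

theorem stmt_6_general {ι : Type*} [DecidableEq ι] (N : Finset ι) (w c : ι → ℝ) (r : ℝ)
    (hr : 0 < r) (hw : ∀ i ∈ N, 0 < w i)
    (So : Finset ι) (hSoN : So ⊆ N)
    (hopt : ∀ S ⊆ N,
      r * (1 - Real.exp (-(∑ i ∈ S, w i))) - ∑ i ∈ S, c i
        ≤ r * (1 - Real.exp (-(∑ i ∈ So, w i))) - ∑ i ∈ So, c i) :
    (So ∩ N.filter (fun i => r * Real.exp (-(w i)) * w i < c i)).card ≤ 1 := by
  by_contra! htwo
  obtain ⟨a, ha, b, hb, hab⟩ := one_lt_card.1 htwo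
  simp only [mem_inter, mem_filter] at ha hb
  wlog hwab : w a ≤ w b generalizing a b
  · exact this b a hab.symm hb ha (le_of_not_ge hwab)
  have hcost : c a ≤ r * (exp (-∑ i ∈ So.erase a, w i) - exp (-∑ i ∈ So, w i)) := by
    have := hopt (So.erase a) ((erase_subset a So).trans hSoN)
    rw [← add_sum_erase So c ha.1] at this
    linarith
  have hgain := exp_neg_sum_erase_sub_exp_neg_sum_le (fun i hi => (hw i (hSoN hi)).le)
    ha.1 hb.1 hab hwab
  linarith [mul_le_mul_of_nonneg_left hgain hr.le, ha.2.2]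

/-- At most one special bidder in the optimum: with `w i > 0`, `c i ≥ 0`,
`g(S) = r * (1 - e^{-∑ i in S, w i}) - ∑ i in S, c i` for `r > 0`, and
`T = {i ∈ N : r * e^{-w i} * w i < c i}`, if `S_o ⊆ N` maximizes `g` over
subsets of `N` then `|S_o ∩ T| ≤ 1`. -/
theorem stmt_6 {ι : Type*} [DecidableEq ι] (N : Finset ι) (w c : ι → ℝ) (r : ℝ)
    (hr : 0 < r) (hw : ∀ i ∈ N, 0 < w i) (hc : ∀ i ∈ N, 0 ≤ c i)
    (So : Finset ι) (hSoN : So ⊆ N)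
    (hopt : ∀ S ⊆ N,
      r * (1 - Real.exp (-(∑ i ∈ S, w i))) - ∑ i ∈ S, c i
        ≤ r * (1 - Real.exp (-(∑ i ∈ So, w i))) - ∑ i ∈ So, c i) :
    (So ∩ N.filter (fun i => r * Real.exp (-(w i)) * w i < c i)).card ≤ 1 :=
  stmt_6_general N w c r hr hw So hSoN hopt
end

section
/- Rounding loss bounded by singleton profit: let w > 0, c ≥ 0, r > 0, x* ∈ (0,1), W ≥ 0, and suppose c ≤ r·e^{−w}·w. Then r·e^{−W}·(1 − e^{−w·x*}) − c·x* ≤ r·(1 − e^{−w}) − c. -/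
/-!
Since `e^{-W} ≤ 1`, it suffices to treat `W = 0`. Moving terms, the claim becomes
`c (1 - x*) ≤ r (e^{-w x*} - e^{-w})`, and the tangent-line bound for `exp` at `-w` gives
`e^{-w x*} - e^{-w} ≥ e^{-w} w (1 - x*)`, which dominates `c (1 - x*)` by the hypothesis on `c`.
-/

open Real

lemma exp_mul_sub_le_exp_sub_exp (a b : ℝ) : exp a * (b - a) ≤ exp b - exp a := by
  have h := mul_le_mul_of_nonneg_left (add_one_le_exp (b - a)) (exp_pos a).le
  rw [← exp_add, add_sub_cancel] at h
  linarith

lemma rounding_loss_le_of_le_exp_neg_mul {w c r x : ℝ} (hr : 0 ≤ r) (hx : x ≤ 1)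
    (hc : c ≤ r * exp (-w) * w) :
    r * (1 - exp (-(w * x))) - c * x ≤ r * (1 - exp (-w)) - c := by
  have htangent : exp (-w) * (w * (1 - x)) ≤ exp (-(w * x)) - exp (-w) := by
    convert exp_mul_sub_le_exp_sub_exp (-w) (-(w * x)) using 2; ring
  have hcx : c * (1 - x) ≤ r * (exp (-(w * x)) - exp (-w)) :=
    calc c * (1 - x) ≤ r * exp (-w) * w * (1 - x) := by gcongr
      _ = r * (exp (-w) * (w * (1 - x))) := by ring
      _ ≤ r * (exp (-(w * x)) - exp (-w)) := by gcongr
  linarith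

theorem stmt_12_general (w c r xs W : ℝ) (hw : 0 < w) (hr : 0 < r)
    (hxs0 : 0 < xs) (hxs1 : xs < 1) (hW : 0 ≤ W)
    (hkey : c ≤ r * Real.exp (-w) * w) :
    r * Real.exp (-W) * (1 - Real.exp (-(w * xs))) - c * xs
      ≤ r * (1 - Real.exp (-w)) - c := by
  have hexpW : exp (-W) ≤ 1 := exp_le_one_iff.mpr (by linarith)
  have hgain : 0 ≤ 1 - exp (-(w * xs)) := by
    rw [sub_nonneg, exp_le_one_iff, neg_nonpos]; positivity
  calc r * exp (-W) * (1 - exp (-(w * xs))) - c * xs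
      ≤ r * 1 * (1 - exp (-(w * xs))) - c * xs := by gcongr
    _ = r * (1 - exp (-(w * xs))) - c * xs := by rw [mul_one]
    _ ≤ r * (1 - exp (-w)) - c := rounding_loss_le_of_le_exp_neg_mul hr.le hxs1.le hkey

/-- Rounding loss bounded by singleton profit: let `w > 0`, `c ≥ 0`, `r > 0`,
`x* ∈ (0,1)`, `W ≥ 0`, and suppose `c ≤ r e^{-w} w`. Then
`r e^{-W} (1 - e^{-w x*}) - c x* ≤ r (1 - e^{-w}) - c`. -/
theorem stmt_12 (w c r xs W : ℝ) (hw : 0 < w) (hc : 0 ≤ c) (hr : 0 < r)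
    (hxs0 : 0 < xs) (hxs1 : xs < 1) (hW : 0 ≤ W)
    (hkey : c ≤ r * Real.exp (-w) * w) :
    r * Real.exp (-W) * (1 - Real.exp (-(w * xs))) - c * xs
      ≤ r * (1 - Real.exp (-w)) - c :=
  stmt_12_general w c r xs W hw hr hxs0 hxs1 hW hkey
end

section
/- Deleting a special bidder improves the objective when another special bidder is present: suppose r > 0, w_j, w_k > 0 with j ≠ k both in S_o, c_j > r·e^{−w_j}·w_j, and w_j ≥ e^{−w_k}·(e^{w_j} − 1). Let W = ∑_{i∈S_o} w_i and C = ∑_{i∈S_o} c_i, with w_k ≤ W − w_j. Then r·(1 − e^{−(W − w_j)}) − (C − c_j) > r·(1 − e^{−W}) − C. -/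
/-!
Removing bidder `j` saves the cost `c_j` and loses revenue
`r (e^{-(W - w_j)} - e^{-W}) = r (1 - e^{-w_j}) e^{-(W - w_j)}`.
Since `w_k ≤ W - w_j`, this loss is at most `r e^{-w_j} e^{-w_k} (e^{w_j} - 1) ≤ r e^{-w_j} w_j < c_j`.
-/

open Real

lemma exp_neg_sub_sub_exp_neg (W w : ℝ) :
    exp (-(W - w)) - exp (-W) = (1 - exp (-w)) * exp (-(W - w)) := by
  have hsplit : exp (-W) = exp (-w) * exp (-(W - w)) := by rw [← exp_add]; ring_nf
  rw [hsplit]; ring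

lemma one_sub_exp_neg_mul_exp_neg_le {w wk W : ℝ} (hw : 0 ≤ w)
    (hineq : w ≥ exp (-wk) * (exp w - 1)) (hwkW : wk ≤ W - w) :
    (1 - exp (-w)) * exp (-(W - w)) ≤ exp (-w) * w := by
  have hpos : 0 ≤ 1 - exp (-w) := by
    rw [sub_nonneg, exp_le_one_iff]; linarith
  calc (1 - exp (-w)) * exp (-(W - w))
      ≤ (1 - exp (-w)) * exp (-wk) := by gcongr
    _ = exp (-w) * (exp (-wk) * (exp w - 1)) := by
        have hinv : exp (-w) * exp w = 1 := by rw [← exp_add, neg_add_cancel, exp_zero]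
        linear_combination -exp (-wk) * hinv
    _ ≤ exp (-w) * w := by gcongr

theorem stmt_13_general (r wj wk cj W C : ℝ) (hr : 0 < r) (hwj : 0 < wj)
    (hcj : cj > r * Real.exp (-wj) * wj)
    (hineq : wj ≥ Real.exp (-wk) * (Real.exp wj - 1))
    (hwkW : wk ≤ W - wj) :
    r * (1 - Real.exp (-(W - wj))) - (C - cj) > r * (1 - Real.exp (-W)) - C := by
  have hloss : r * (exp (-(W - wj)) - exp (-W)) ≤ r * exp (-wj) * wj := by
    rw [exp_neg_sub_sub_exp_neg, mul_assoc]
    exact mul_le_mul_of_nonneg_left (one_sub_exp_neg_mul_exp_neg_le hwj.le hineq hwkW) hr.le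
  linarith

/-- Deleting a special bidder improves the objective when another special bidder
is present: if `r > 0`, `w_j, w_k > 0`, `c_j > r e^{-w_j} w_j`,
`w_j ≥ e^{-w_k} (e^{w_j} - 1)`, and `w_k ≤ W - w_j`, then
`r (1 - e^{-(W - w_j)}) - (C - c_j) > r (1 - e^{-W}) - C`. -/
theorem stmt_13 (r wj wk cj W C : ℝ) (hr : 0 < r) (hwj : 0 < wj) (hwk : 0 < wk)
    (hcj : cj > r * Real.exp (-wj) * wj)
    (hineq : wj ≥ Real.exp (-wk) * (Real.exp wj - 1))
    (hwkW : wk ≤ W - wj) :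
    r * (1 - Real.exp (-(W - wj))) - (C - cj) > r * (1 - Real.exp (-W)) - C :=
  stmt_13_general r wj wk cj W C hr hwj hcj hineq hwkW
end

section
/- Subset-sum reduction correctness: for positive reals w_1,…,w_n and W > 0, define g(S) = 1 − e^{−∑_{i∈S} w_i} − e^{−W}·∑_{i∈S} w_i for S ⊆ [n]. Then g(S) ≤ 1 − e^{−W} − W·e^{−W} for all S, with equality if and only if ∑_{i∈S} w_i = W. -/
/-!
Only the value `x = ∑ i ∈ S, w i` matters. The gap `g(W) - g(x) = e^{-x} - e^{-W}(1 + W - x)` is the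
height of `e^{-x}` above its tangent line at `W`, that is `e^{-W}(e^{t} - (1 + t))` with `t = W - x`,
which is nonnegative by `1 + t ≤ e^t` and vanishes only at `t = 0`.
-/

open Real

lemma exp_neg_tangent_le (x W : ℝ) : exp (-W) * (W - x + 1) ≤ exp (-x) :=
  calc exp (-W) * (W - x + 1) ≤ exp (-W) * exp (W - x) := by gcongr; exact add_one_le_exp _
    _ = exp (-x) := by rw [← exp_add]; ring_nf

lemma exp_neg_tangent_lt {x W : ℝ} (h : x ≠ W) : exp (-W) * (W - x + 1) < exp (-x) :=
  calc exp (-W) * (W - x + 1) < exp (-W) * exp (W - x) :=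
        mul_lt_mul_of_pos_left (add_one_lt_exp (sub_ne_zero.2 h.symm)) (exp_pos _)
    _ = exp (-x) := by rw [← exp_add]; ring_nf

lemma one_sub_exp_neg_sub_mul_le (x W : ℝ) :
    1 - exp (-x) - exp (-W) * x ≤ 1 - exp (-W) - W * exp (-W) := by
  linear_combination exp_neg_tangent_le x W

lemma one_sub_exp_neg_sub_mul_eq_iff (x W : ℝ) :
    1 - exp (-x) - exp (-W) * x = 1 - exp (-W) - W * exp (-W) ↔ x = W := by
  refine ⟨fun h => ?_, fun h => h ▸ by ring⟩
  by_contra hne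
  exact (exp_neg_tangent_lt hne).ne (by linear_combination h)

theorem stmt_14_general (n : ℕ) (w : Fin n → ℝ) (W : ℝ) :
    ∀ S : Finset (Fin n),
      (1 - Real.exp (-(∑ i ∈ S, w i)) - Real.exp (-W) * ∑ i ∈ S, w i
          ≤ 1 - Real.exp (-W) - W * Real.exp (-W)) ∧
      (1 - Real.exp (-(∑ i ∈ S, w i)) - Real.exp (-W) * ∑ i ∈ S, w i
          = 1 - Real.exp (-W) - W * Real.exp (-W) ↔ ∑ i ∈ S, w i = W) :=
  fun S => ⟨one_sub_exp_neg_sub_mul_le (∑ i ∈ S, w i) W, one_sub_exp_neg_sub_mul_eq_iff _ W⟩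

/-- Subset-sum reduction correctness: for positive reals `w_1, ..., w_n` and
`W > 0`, with `g(S) = 1 - e^{-∑_{i∈S} w i} - e^{-W} * ∑_{i∈S} w i`, we have
`g(S) ≤ 1 - e^{-W} - W e^{-W}` for all `S ⊆ [n]`, with equality iff
`∑_{i∈S} w i = W`. -/
theorem stmt_14 (n : ℕ) (w : Fin n → ℝ) (W : ℝ) (hw : ∀ i, 0 < w i) (hW : 0 < W) :
    ∀ S : Finset (Fin n),
      (1 - Real.exp (-(∑ i ∈ S, w i)) - Real.exp (-W) * ∑ i ∈ S, w i
          ≤ 1 - Real.exp (-W) - W * Real.exp (-W)) ∧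
      (1 - Real.exp (-(∑ i ∈ S, w i)) - Real.exp (-W) * ∑ i ∈ S, w i
          = 1 - Real.exp (-W) - W * Real.exp (-W) ↔ ∑ i ∈ S, w i = W) :=
  stmt_14_general n w W
end
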